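/- Let G be a finite simple graph and D a dominating set of G. Then there exists an independent set X ⊆ D that dominates D (every vertex of D \ X has a neighbor in X) and a set I ⊆ V(G) \ D such that X ∪ I is an independent dominating set of G. -/

import Mathlib

open Finset

/-- `D` is a dominating set of `G`: every vertex outside `D` has a neighbor in `D`. -/
def IsDomSet {V : Type*} (G : SimpleGraph V) (D : Finset V) : Prop :=
  ∀ v ∉ D, ∃ u ∈ D, G.Adj u v

/-- `D` is an independent set of `G`. -/
def IsIndepSet {V : Type*} (G : SimpleGraph V) (D : Finset V) : Prop :=
  ∀ u ∈ D, ∀ v ∈ D, ¬ G.Adj u v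

/-- The domination number. -/
noncomputable def domNum {V : Type*} [Fintype V] (G : SimpleGraph V) : ℕ :=
  sInf {n | ∃ D : Finset V, IsDomSet G D ∧ D.card = n}

/-- The independent domination number. -/
noncomputable def indDomNum {V : Type*} [Fintype V] (G : SimpleGraph V) : ℕ :=
  sInf {n | ∃ D : Finset V, IsDomSet G D ∧ IsIndepSet G D ∧ D.card = n}

/-!
Extend an independent set maximally inside a prescribed region, so that no vertex of the region can be
added: every vertex of the region left out then has a neighbour in the extended set. Doing this first
inside `D` (starting from `∅`) gives `X`, then inside `Dᶜ` (starting from `X`) gives `I`; a vertex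
outside `X ∪ I` is dominated by `X` if it lies in `D` and by `X ∪ I` otherwise.
-/

section

variable {V : Type*} [DecidableEq V] {G : SimpleGraph V}

lemma IsIndepSet.insert_of_not_adj {S : Finset V} {v : V} (hS : IsIndepSet G S)
    (hv : ∀ u ∈ S, ¬ G.Adj u v) : IsIndepSet G (insert v S) := by
  simp only [IsIndepSet, mem_insert, forall_eq_or_imp]
  exact ⟨⟨G.irrefl, fun u hu huv => hv u hu huv.symm⟩, fun u hu => ⟨hv u hu, hS u hu⟩⟩

lemma IsIndepSet.exists_maximal_extension {S : Finset V} (hS : IsIndepSet G S) (U : Finset V) :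
    ∃ J ⊆ U, IsIndepSet G (S ∪ J) ∧ ∀ v ∈ U \ (S ∪ J), ∃ u ∈ S ∪ J, G.Adj u v := by
  classical
  obtain ⟨J, hJmem, hJmax⟩ := (U.powerset.filter fun J => IsIndepSet G (S ∪ J)).exists_max_image
    card ⟨∅, by simpa using hS⟩
  rw [mem_filter, mem_powerset] at hJmem
  refine ⟨J, hJmem.1, hJmem.2, fun v hv => ?_⟩
  rw [mem_sdiff, mem_union, not_or] at hv
  by_contra! hisolated
  have hbigger : insert v J ∈ U.powerset.filter fun J => IsIndepSet G (S ∪ J) := by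
    rw [mem_filter, mem_powerset, union_insert]
    exact ⟨insert_subset hv.1 hJmem.1, hJmem.2.insert_of_not_adj hisolated⟩
  have := hJmax _ hbigger
  rw [card_insert_of_notMem hv.2.2] at this
  omega

end

theorem stmt8_general {V : Type*} [Fintype V] [DecidableEq V] (G : SimpleGraph V)
    (D : Finset V) :
    ∃ X I : Finset V, X ⊆ D ∧ IsIndepSet G X ∧
      (∀ v ∈ D \ X, ∃ u ∈ X, G.Adj u v) ∧
      I ⊆ Dᶜ ∧ IsDomSet G (X ∪ I) ∧ IsIndepSet G (X ∪ I) := by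
  have hempty : IsIndepSet G (∅ : Finset V) := by simp [IsIndepSet]
  obtain ⟨X, hXD, hXind, hXdom⟩ := hempty.exists_maximal_extension D
  simp only [empty_union] at hXind hXdom
  obtain ⟨I, hID, hIind, hIdom⟩ := hXind.exists_maximal_extension Dᶜ
  refine ⟨X, I, hXD, hXind, hXdom, hID, fun v hv => ?_, hIind⟩
  by_cases hvD : v ∈ D
  · obtain ⟨u, hu, huv⟩ := hXdom v (mem_sdiff.2 ⟨hvD, fun h => hv (mem_union_left _ h)⟩)
    exact ⟨u, mem_union_left _ hu, huv⟩
  · exact hIdom v (mem_sdiff.2 ⟨mem_compl.2 hvD, hv⟩)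

theorem stmt8 {V : Type*} [Fintype V] [DecidableEq V] (G : SimpleGraph V)
    (D : Finset V) (hD : IsDomSet G D) :
    ∃ X I : Finset V, X ⊆ D ∧ IsIndepSet G X ∧
      (∀ v ∈ D \ X, ∃ u ∈ X, G.Adj u v) ∧
      I ⊆ Dᶜ ∧ IsDomSet G (X ∪ I) ∧ IsIndepSet G (X ∪ I) :=
  stmt8_general G D
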